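/- arXiv:math/0103056 — 4 statements merged into one kernel-verified Lean document; each statement's English description precedes it below -/
import Mathlib

section
/- Let G be a row-finite directed graph which satisfies Condition (K), and let (E, v_0) be a 1-sink extension of G. Then the inessential part H_E := G^0 ∖ \overline{v_0} is a saturated hereditary subset of G^0. -/
/-- A directed graph realized inside ambient vertex type `V` and edge type `E`,
with globally given source and range maps. -/
structure DGraph (V E : Type*) where
  verts : Set V
  edges : Set E

variable {V E : Type*}

/-- The endpoints of every edge of the graph are vertices of the graph. -/
def WellFormed (s r : E → V) (G : DGraph V E) : Prop :=
  ∀ e ∈ G.edges, s e ∈ G.verts ∧ r e ∈ G.verts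

/-- Row-finite: every vertex emits only finitely many edges. -/
def RowFinite (s : E → V) (G : DGraph V E) : Prop :=
  ∀ v : V, {e ∈ G.edges | s e = v}.Finite

/-- A sink is a vertex emitting no edges. -/
def IsSink (s : E → V) (G : DGraph V E) (v : V) : Prop :=
  v ∈ G.verts ∧ ∀ e ∈ G.edges, s e ≠ v

/-- A source is a vertex receiving no edges. -/
def IsSource (r : E → V) (G : DGraph V E) (v : V) : Prop :=
  v ∈ G.verts ∧ ∀ e ∈ G.edges, r e ≠ v

/-- A path is a nonempty finite sequence of composable edges of the graph. -/
def IsPath (s r : E → V) (G : DGraph V E) (p : List E) : Prop :=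
  p ≠ [] ∧ (∀ e ∈ p, e ∈ G.edges) ∧ p.Chain' (fun e f => r e = s f)

/-- `PathFromTo s r G p v w` : `p` is a path in `G` with source `v` and range `w`. -/
def PathFromTo (s r : E → V) (G : DGraph V E) (p : List E) (v w : V) : Prop :=
  IsPath s r G p ∧ (∃ e, p.head? = some e ∧ s e = v) ∧
    (∃ e, p.getLast? = some e ∧ r e = w)

/-- `v ≥ w` : `v = w` or there is a path from `v` to `w`. -/
def Reach (s r : E → V) (G : DGraph V E) (v w : V) : Prop :=
  v = w ∨ ∃ p, PathFromTo s r G p v w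

/-- A loop based at `v` is a path with source and range `v`. -/
def IsLoop (s r : E → V) (G : DGraph V E) (p : List E) (v : V) : Prop :=
  PathFromTo s r G p v v

/-- A simple loop returns to its base point exactly once. -/
def IsSimpleLoop (s r : E → V) (G : DGraph V E) (p : List E) (v : V) : Prop :=
  IsLoop s r G p v ∧
    ∀ i (h : i + 1 < p.length), r (p.get ⟨i, Nat.lt_of_succ_lt h⟩) ≠ v

/-- Condition (K): every vertex is the base of no loop or of at least two
distinct simple loops. -/
def ConditionK (s r : E → V) (G : DGraph V E) : Prop :=
  ∀ v ∈ G.verts, (¬ ∃ p, IsLoop s r G p v) ∨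
    ∃ p q, IsSimpleLoop s r G p v ∧ IsSimpleLoop s r G q v ∧ p ≠ q

/-- A maximal tail in `G`. -/
def MaximalTail (s r : E → V) (G : DGraph V E) (γ : Set V) : Prop :=
  γ.Nonempty ∧ γ ⊆ G.verts ∧
  (∀ v ∈ γ, ∀ w ∈ γ, ∃ y ∈ γ, Reach s r G v y ∧ Reach s r G w y) ∧
  (∀ v w, Reach s r G v w → w ∈ γ → v ∈ γ) ∧
  (∀ w ∈ γ, ∃ e ∈ G.edges, s e = w ∧ r e ∈ γ)

/-- `(Eg, v0)` is a 1-sink extension of `G`. -/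
structure OneSinkExt (s r : E → V) (G Eg : DGraph V E) (v0 : V) : Prop where
  wfG : WellFormed s r G
  wfE : WellFormed s r Eg
  sub_verts : G.verts ⊆ Eg.verts
  sub_edges : G.edges ⊆ Eg.edges
  rowfin : RowFinite s Eg
  H_fin : (Eg.verts \ G.verts).Finite
  H_no_sources : ∀ v ∈ Eg.verts \ G.verts, ¬ IsSource r Eg v
  v0_mem : v0 ∈ Eg.verts \ G.verts
  v0_sink : IsSink s Eg v0
  sink_unique : ∀ v ∈ Eg.verts \ G.verts, IsSink s Eg v → v = v0
  no_H_loops : ∀ p v, IsLoop s r Eg p v →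
    ¬ (∀ e ∈ p, s e ∈ Eg.verts \ G.verts ∧ r e ∈ Eg.verts \ G.verts)
  new_edge_range : ∀ e ∈ Eg.edges, e ∉ G.edges → r e ∈ Eg.verts \ G.verts
  sinks_preserved : ∀ v, IsSink s G v → IsSink s Eg v

/-- The closure of the sink `v0` : the union of all maximal tails of `G`
every vertex of which reaches `v0` in `Eg`. -/
def closureSink (s r : E → V) (G Eg : DGraph V E) (v0 : V) : Set V :=
  {v | ∃ γ, MaximalTail s r G γ ∧ (∀ u ∈ γ, Reach s r Eg u v0) ∧ v ∈ γ}

/-- Hereditary subset of vertices. -/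
def Hereditary (s r : E → V) (G : DGraph V E) (K : Set V) : Prop :=
  ∀ e ∈ G.edges, s e ∈ K → r e ∈ K

/-- Saturated subset of vertices. -/
def Saturated (s r : E → V) (G : DGraph V E) (K : Set V) : Prop :=
  ∀ v ∈ G.verts, ¬ IsSink s G v → (∀ e ∈ G.edges, s e = v → r e ∈ K) → v ∈ K

/-!
The closure of `v0` is a union of maximal tails, so it inherits two properties of tails: it
contains every predecessor of its vertices, and each of its vertices emits an edge back into it.
The complement of any set with the first property is hereditary, and the complement of any set
with the second is saturated.
-/

section

variable {s r : E → V} {G : DGraph V E}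

theorem MaximalTail.mem_of_reach {γ : Set V} (hγ : MaximalTail s r G γ) {v w : V}
    (hvw : Reach s r G v w) (hw : w ∈ γ) : v ∈ γ :=
  hγ.2.2.2.1 v w hvw hw

theorem MaximalTail.exists_edge_mem {γ : Set V} (hγ : MaximalTail s r G γ) {w : V} (hw : w ∈ γ) :
    ∃ e ∈ G.edges, s e = w ∧ r e ∈ γ :=
  hγ.2.2.2.2 w hw

end

section

variable (s r : E → V) (G : DGraph V E)

theorem pathFromTo_singleton {e : E} (he : e ∈ G.edges) : PathFromTo s r G [e] (s e) (r e) :=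
  ⟨⟨List.cons_ne_nil e [], by simpa using he, List.isChain_singleton e⟩, ⟨e, rfl, rfl⟩,
    ⟨e, rfl, rfl⟩⟩

theorem reach_of_mem_edges {e : E} (he : e ∈ G.edges) : Reach s r G (s e) (r e) :=
  Or.inr ⟨[e], pathFromTo_singleton s r G he⟩

theorem hereditary_diff_of_source_mem {C : Set V} (hwf : WellFormed s r G)
    (hC : ∀ e ∈ G.edges, r e ∈ C → s e ∈ C) : Hereditary s r G (G.verts \ C) :=
  fun e he hse => ⟨(hwf e he).2, fun hre => hse.2 (hC e he hre)⟩

theorem saturated_diff_of_exists_edge {C : Set V}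
    (hC : ∀ v ∈ C, ∃ e ∈ G.edges, s e = v ∧ r e ∈ C) : Saturated s r G (G.verts \ C) := by
  intro v hv _ hall
  refine ⟨hv, fun hvC => ?_⟩
  obtain ⟨e, he, rfl, hre⟩ := hC v hvC
  exact (hall e he rfl).2 hre

variable (Eg : DGraph V E) (v0 : V)

theorem source_mem_closureSink {e : E} (he : e ∈ G.edges) (hre : r e ∈ closureSink s r G Eg v0) :
    s e ∈ closureSink s r G Eg v0 := by
  obtain ⟨γ, hγ, hreach, hmem⟩ := hre
  exact ⟨γ, hγ, hreach, hγ.mem_of_reach (reach_of_mem_edges s r G he) hmem⟩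

theorem exists_edge_mem_closureSink {v : V} (hv : v ∈ closureSink s r G Eg v0) :
    ∃ e ∈ G.edges, s e = v ∧ r e ∈ closureSink s r G Eg v0 := by
  obtain ⟨γ, hγ, hreach, hmem⟩ := hv
  obtain ⟨e, he, hse, hre⟩ := hγ.exists_edge_mem hmem
  exact ⟨e, he, hse, γ, hγ, hreach, hre⟩

end

theorem inessentialPart_saturated_hereditary_general
    (s r : E → V) (G Eg : DGraph V E) (v0 : V)
    (hext : OneSinkExt s r G Eg v0) :
    (G.verts \ closureSink s r G Eg v0) ⊆ G.verts ∧
    Hereditary s r G (G.verts \ closureSink s r G Eg v0) ∧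
    Saturated s r G (G.verts \ closureSink s r G Eg v0) :=
  ⟨Set.sdiff_subset,
    hereditary_diff_of_source_mem s r G hext.wfG
      fun _ he => source_mem_closureSink s r G Eg v0 he,
    saturated_diff_of_exists_edge s r G
      fun _ hv => exists_edge_mem_closureSink s r G Eg v0 hv⟩

/-- For a row-finite graph `G` satisfying Condition (K) and a 1-sink
extension `(Eg, v0)` of `G`, the inessential part `H_E = G^0 \ closure(v0)` is a
saturated hereditary subset of `G^0`. -/
theorem inessentialPart_saturated_hereditary
    (s r : E → V) (G Eg : DGraph V E) (v0 : V)
    (hGrf : RowFinite s G) (hK : ConditionK s r G)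
    (hext : OneSinkExt s r G Eg v0) :
    (G.verts \ closureSink s r G Eg v0) ⊆ G.verts ∧
    Hereditary s r G (G.verts \ closureSink s r G Eg v0) ∧
    Saturated s r G (G.verts \ closureSink s r G Eg v0) :=
  inessentialPart_saturated_hereditary_general s r G Eg v0 hext
end

section
/- Let G be a row-finite directed graph which satisfies Condition (K), and let (E, v_0) be a 1-sink extension of G. If w ∈ H_E (the inessential part of E), then the set of paths α in E with source w and range v_0 is finite. -/
variable {V E : Type*}

/-!
If there were infinitely many paths from `w` to `v0`, row-finiteness of `E` and König's
lemma would give an infinite path starting at `w` all of whose vertices have infinitely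
many paths to `v0`. Edges leaving the finite set `H = E⁰ \ G⁰` stay in `H`, and `H`
carries no loop, so this infinite path never enters `H`: it is an infinite path in `G`.
The vertices of `G` that reach it form a maximal tail of `G` which reaches `v0` and
contains `w`, so `w` lies in the closure of `v0`.
-/

namespace PathFromTo

variable {s r : E → V} {G : DGraph V E} {p : List E} {u v w : V}

lemma reach (h : PathFromTo s r G p v w) : Reach s r G v w :=
  Or.inr ⟨p, h⟩

lemma mono {D : DGraph V E} (hGD : G.edges ⊆ D.edges) (h : PathFromTo s r G p v w) :
    PathFromTo s r D p v w :=
  ⟨⟨h.1.1, fun e he => hGD (h.1.2.1 e he), h.1.2.2⟩, h.2⟩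

lemma singleton {e : E} (he : e ∈ G.edges) : PathFromTo s r G [e] (s e) (r e) :=
  ⟨⟨by simp, by simp [he], List.isChain_singleton e⟩, ⟨e, rfl, rfl⟩, ⟨e, rfl, rfl⟩⟩

lemma append {q : List E} (hp : PathFromTo s r G p u v) (hq : PathFromTo s r G q v w) :
    PathFromTo s r G (p ++ q) u w := by
  obtain ⟨⟨hpne, hpm, hpc⟩, ⟨e₁, he₁, hse₁⟩, ⟨e₂, he₂, hre₂⟩⟩ := hp
  obtain ⟨⟨hqne, hqm, hqc⟩, ⟨e₃, he₃, hse₃⟩, ⟨e₄, he₄, hre₄⟩⟩ := hq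
  refine ⟨⟨by simp [hpne], ?_, ?_⟩, ⟨e₁, ?_, hse₁⟩, ⟨e₄, ?_, hre₄⟩⟩
  · intro a ha
    rcases List.mem_append.1 ha with h | h
    exacts [hpm a h, hqm a h]
  · refine List.isChain_append.2 ⟨hpc, hqc, fun x hx y hy => ?_⟩
    obtain rfl : x = e₂ := by simpa [he₂] using hx.symm
    obtain rfl : y = e₃ := by simpa [he₃] using hy.symm
    rw [hre₂, hse₃]
  · rw [List.head?_append, he₁]; rfl
  · rw [List.getLast?_append_of_ne_nil _ hqne, he₄]

lemma exists_eq_cons (h : PathFromTo s r G p v w) :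
    ∃ e t, p = e :: t ∧ e ∈ G.edges ∧ s e = v ∧
      (t = [] ∧ r e = w ∨ PathFromTo s r G t (r e) w) := by
  obtain ⟨⟨hne, hmem, hch⟩, ⟨e, he, rfl⟩, ⟨e', he', rfl⟩⟩ := h
  obtain ⟨t, rfl⟩ : ∃ t, p = e :: t := ⟨p.tail, (List.cons_head?_tail he).symm⟩
  refine ⟨e, t, rfl, hmem e List.mem_cons_self, rfl, ?_⟩
  rcases t with _ | ⟨a, t⟩
  · left
    simp_all
  · right
    obtain ⟨hea, hch⟩ := List.isChain_cons.1 hch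
    rw [List.getLast?_cons_cons] at he'
    exact ⟨⟨List.cons_ne_nil a t, fun x hx => hmem x (List.mem_cons_of_mem e hx), hch⟩,
      ⟨a, rfl, (hea a rfl).symm⟩, ⟨e', he', rfl⟩⟩

lemma source_mem (hwf : WellFormed s r G) (h : PathFromTo s r G p v w) : v ∈ G.verts := by
  obtain ⟨e, _, _, he, rfl, _⟩ := h.exists_eq_cons
  exact (hwf e he).1

end PathFromTo

namespace Reach

variable {s r : E → V} {G : DGraph V E} {u v w : V}

lemma trans (h₁ : Reach s r G u v) (h₂ : Reach s r G v w) : Reach s r G u w := by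
  rcases h₁ with rfl | ⟨p, hp⟩
  · exact h₂
  rcases h₂ with rfl | ⟨q, hq⟩
  · exact hp.reach
  · exact (hp.append hq).reach

lemma mono {D : DGraph V E} (hGD : G.edges ⊆ D.edges) (h : Reach s r G v w) :
    Reach s r D v w :=
  h.imp_right fun ⟨p, hp⟩ => ⟨p, hp.mono hGD⟩

lemma source_mem (hwf : WellFormed s r G) (hw : w ∈ G.verts) (h : Reach s r G v w) :
    v ∈ G.verts := by
  rcases h with rfl | ⟨p, hp⟩
  exacts [hw, hp.source_mem hwf]

end Reach

structure IsRay (s r : E → V) (G : DGraph V E) (f : ℕ → E) : Prop where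
  mem : ∀ n, f n ∈ G.edges
  chain : ∀ n, r (f n) = s (f (n + 1))

def rayTail (s r : E → V) (G : DGraph V E) (f : ℕ → E) : Set V :=
  {v | ∃ i, Reach s r G v (s (f i))}

namespace IsRay

variable {s r : E → V} {G : DGraph V E} {f : ℕ → E}

lemma shift (hf : IsRay s r G f) (N : ℕ) : IsRay s r G (fun n => f (N + n)) :=
  ⟨fun n => hf.mem (N + n), fun n => hf.chain (N + n)⟩

lemma pathFromTo_segment (hf : IsRay s r G f) (a k : ℕ) :
    PathFromTo s r G ((List.range (k + 1)).map (fun i => f (a + i))) (s (f a)) (r (f (a + k))) := by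
  induction k with
  | zero => simpa using PathFromTo.singleton (hf.mem a)
  | succ k ih =>
    rw [List.range_succ, List.map_append]
    refine ih.append ?_
    simpa [hf.chain, add_assoc] using
      PathFromTo.singleton (s := s) (r := r) (hf.mem (a + (k + 1)))

lemma reach_of_le (hf : IsRay s r G f) {a b : ℕ} (hab : a ≤ b) :
    Reach s r G (s (f a)) (s (f b)) := by
  induction b, hab using Nat.le_induction with
  | base => exact Or.inl rfl
  | succ b _ ih => exact ih.trans (hf.chain b ▸ (PathFromTo.singleton (hf.mem b)).reach)

/-- Pigeonhole: two edges of the ray end at the same vertex, and the edges between them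
form a loop. -/
lemma exists_loop_of_range_subset {S : Set V} (hf : IsRay s r G f) (hS : S.Finite)
    (hfS : ∀ n, r (f n) ∈ S) :
    ∃ p v, IsLoop s r G p v ∧ ∀ e ∈ p, s e ∈ S ∧ r e ∈ S := by
  have := hS.to_subtype
  obtain ⟨i, j, hij, heq⟩ :=
    Finite.exists_ne_map_eq_of_infinite (fun n => (⟨r (f n), hfS n⟩ : S))
  obtain ⟨i, j, hlt, heq⟩ : ∃ i j, i < j ∧ r (f i) = r (f j) := by
    rcases hij.lt_or_gt with h | h
    exacts [⟨i, j, h, congrArg Subtype.val heq⟩, ⟨j, i, h, congrArg Subtype.val heq.symm⟩]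
  have hloop := hf.pathFromTo_segment (i + 1) (j - i - 1)
  rw [← hf.chain, show i + 1 + (j - i - 1) = j by omega, ← heq] at hloop
  refine ⟨_, _, hloop, fun e he => ?_⟩
  obtain ⟨k, -, rfl⟩ := List.mem_map.1 he
  refine ⟨?_, hfS _⟩
  rw [show i + 1 + k = i + k + 1 by omega, ← hf.chain]
  exact hfS (i + k)

lemma maximalTail (hwf : WellFormed s r G) (hf : IsRay s r G f) :
    MaximalTail s r G (rayTail s r G f) := by
  refine ⟨⟨s (f 0), 0, Or.inl rfl⟩, ?_, ?_, ?_, ?_⟩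
  · rintro v ⟨i, hi⟩
    exact hi.source_mem hwf (hwf _ (hf.mem i)).1
  · rintro v ⟨i, hi⟩ u ⟨j, hj⟩
    exact ⟨s (f (max i j)), ⟨max i j, Or.inl rfl⟩,
      hi.trans (hf.reach_of_le (le_max_left i j)), hj.trans (hf.reach_of_le (le_max_right i j))⟩
  · rintro v u hvu ⟨i, hi⟩
    exact ⟨i, hvu.trans hi⟩
  · rintro v ⟨i, rfl | ⟨p, hp⟩⟩
    · exact ⟨f i, hf.mem i, rfl, i + 1, Or.inl (hf.chain i)⟩
    · obtain ⟨e, t, -, he, rfl, ⟨-, hr⟩ | ht⟩ := hp.exists_eq_cons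
      exacts [⟨e, he, rfl, i, Or.inl hr⟩, ⟨e, he, rfl, i, ht.reach⟩]

end IsRay

section Konig

variable {s r : E → V} {D : DGraph V E} {v w : V}

lemma finite_pathFromTo_of_forall_edge (hrf : RowFinite s D)
    (h : ∀ e ∈ D.edges, s e = v → {p | PathFromTo s r D p (r e) w}.Finite) :
    {p | PathFromTo s r D p v w}.Finite := by
  refine ((hrf v).biUnion fun e he =>
    ((h e he.1 he.2).image (List.cons e)).insert [e]).subset fun p hp => ?_
  obtain ⟨e, t, rfl, he, hse, ⟨rfl, -⟩ | ht⟩ := PathFromTo.exists_eq_cons hp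
  exacts [Set.mem_biUnion ⟨he, hse⟩ (Set.mem_insert _ _),
    Set.mem_biUnion ⟨he, hse⟩ (Set.mem_insert_of_mem _ ⟨t, ht, rfl⟩)]

lemma exists_isRay_of_infinite_pathFromTo (hrf : RowFinite s D)
    (hinf : {p | PathFromTo s r D p v w}.Infinite) :
    ∃ f, IsRay s r D f ∧ s (f 0) = v ∧
      ∀ n, {p | PathFromTo s r D p (s (f n)) w}.Infinite := by
  let Bad := {x : V // {p | PathFromTo s r D p x w}.Infinite}
  have step (x : Bad) :
      ∃ e ∈ D.edges, s e = x.1 ∧ {p | PathFromTo s r D p (r e) w}.Infinite := by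
    by_contra! h
    exact x.2 (finite_pathFromTo_of_forall_edge hrf h)
  choose next hmem hsrc hinfNext using step
  let x : ℕ → Bad := fun n => Nat.rec ⟨v, hinf⟩ (fun _ y => ⟨r (next y), hinfNext y⟩) n
  have hsx (n : ℕ) : s (next (x n)) = (x n).1 := hsrc (x n)
  exact ⟨fun n => next (x n), ⟨fun n => hmem _, fun n => (hsx (n + 1)).symm⟩, hsx 0,
    fun n => hsx n ▸ (x n).2⟩

end Konig

lemma OneSinkExt.isRay_of_isRay {s r : E → V} {G Eg : DGraph V E} {v0 : V}
    (hext : OneSinkExt s r G Eg v0) {f : ℕ → E} (hf : IsRay s r Eg f) : IsRay s r G f := by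
  refine ⟨fun N => ?_, hf.chain⟩
  by_contra hN
  have hH (m : ℕ) : r (f (N + m)) ∈ Eg.verts \ G.verts := by
    induction m with
    | zero => exact hext.new_edge_range _ (hf.mem N) hN
    | succ m ih =>
      rw [hf.chain] at ih
      rw [← add_assoc]
      exact hext.new_edge_range _ (hf.mem _) fun he => ih.2 (hext.wfG _ he).1
  obtain ⟨p, v, hloop, hpH⟩ := (hf.shift N).exists_loop_of_range_subset hext.H_fin hH
  exact hext.no_H_loops p v hloop hpH

theorem finitely_many_paths_to_sink_from_inessential_general
    (s r : E → V) (G Eg : DGraph V E) (v0 : V)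
    (hext : OneSinkExt s r G Eg v0)
    (w : V) (hw : w ∈ G.verts \ closureSink s r G Eg v0) :
    {p : List E | PathFromTo s r Eg p w v0}.Finite := by
  by_contra hinf
  obtain ⟨f, hf, hf0, hfinf⟩ := exists_isRay_of_infinite_pathFromTo hext.rowfin hinf
  refine hw.2 ⟨rayTail s r G f, (hext.isRay_of_isRay hf).maximalTail hext.wfG, ?_,
    ⟨0, Or.inl hf0.symm⟩⟩
  rintro u ⟨i, hi⟩
  obtain ⟨p, hp⟩ := (hfinf i).nonempty
  exact (hi.mono hext.sub_edges).trans hp.reach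

/-- If `w` lies in the inessential part of a 1-sink extension
`(Eg, v0)` of a row-finite graph `G` satisfying Condition (K), then there are
only finitely many paths in `Eg` from `w` to `v0`. -/
theorem finitely_many_paths_to_sink_from_inessential
    (s r : E → V) (G Eg : DGraph V E) (v0 : V)
    (hGrf : RowFinite s G) (hK : ConditionK s r G)
    (hext : OneSinkExt s r G Eg v0)
    (w : V) (hw : w ∈ G.verts \ closureSink s r G Eg v0) :
    {p : List E | PathFromTo s r Eg p w v0}.Finite :=
  finitely_many_paths_to_sink_from_inessential_general s r G Eg v0 hext w hw
end

section
/- Let G be a row-finite directed graph and let (E, v_0) be a 1-sink extension of G. Then every maximal tail of E is contained in G^0, and a subset γ ⊆ G^0 is a maximal tail in E if and only if it is a maximal tail in G. -/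
variable {V E : Type*}

variable {s r : E → V}

theorem Reach.mono_s7 {G G' : DGraph V E} (h : G.edges ⊆ G'.edges) {v w : V}
    (hvw : Reach s r G v w) : Reach s r G' v w := by
  rcases hvw with rfl | ⟨p, ⟨hne, hp, hchain⟩, hhead, hlast⟩
  · exact Or.inl rfl
  · exact Or.inr ⟨p, ⟨hne, fun e he => h (hp e he), hchain⟩, hhead, hlast⟩

/-- Going backwards along the path, each edge enters the source of the next one, a vertex
of `G`. -/
theorem List.IsChain.forall_mem_edges {G G' : DGraph V E} (hG : WellFormed s r G)
    (hback : ∀ e ∈ G'.edges, r e ∈ G.verts → e ∈ G.edges) :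
    ∀ {p : List E} {e : E}, p.IsChain (fun e f => r e = s f) → (∀ f ∈ p, f ∈ G'.edges) →
      p.getLast? = some e → r e ∈ G.verts → ∀ f ∈ p, f ∈ G.edges
  | [], _, _, _, hlast, _ => by simp at hlast
  | [a], e, _, hp, hlast, he => by
    obtain rfl : a = e := by simpa using hlast
    simpa using hback a (hp a (by simp)) he
  | a :: b :: l, e, hchain, hp, hlast, he => by
    obtain ⟨hab, hchain⟩ := List.isChain_cons_cons.mp hchain
    have hbl := hchain.forall_mem_edges hG hback (fun f hf => hp f (by simp [hf]))
      (by rwa [List.getLast?_cons_cons] at hlast) he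
    have haG : a ∈ G.edges :=
      hback a (hp a (by simp)) (hab ▸ (hG b (hbl b (by simp))).1)
    simpa [haG] using hbl

theorem Reach.restrict {G G' : DGraph V E} (hG : WellFormed s r G)
    (hback : ∀ e ∈ G'.edges, r e ∈ G.verts → e ∈ G.edges) {v w : V}
    (hvw : Reach s r G' v w) (hw : w ∈ G.verts) : Reach s r G v w := by
  rcases hvw with rfl | ⟨p, ⟨hne, hp, hchain⟩, hhead, e, hlast, rfl⟩
  · exact Or.inl rfl
  · exact Or.inr ⟨p, ⟨hne, hchain.forall_mem_edges hG hback hp hlast hw, hchain⟩, hhead,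
      e, hlast, rfl⟩

theorem pathFromTo_map_range {G : DGraph V E} (e : ℕ → E) (he : ∀ k, e k ∈ G.edges)
    (hchain : ∀ k, r (e k) = s (e (k + 1))) (n : ℕ) :
    PathFromTo s r G ((List.range (n + 1)).map e) (s (e 0)) (r (e n)) := by
  refine ⟨⟨by simp, by simpa using fun k _ => he k, ?_⟩,
    ⟨e 0, by simp [List.range_succ_eq_map], rfl⟩, ⟨e n, ?_, rfl⟩⟩
  · exact List.isChain_map e |>.mpr <| (List.isChain_range_succ _ n).mpr fun m _ => hchain m
  · simp [List.range_succ]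

/-- A nonempty finite set of vertices each of which emits an edge back into the set
carries a loop: follow such edges until a vertex repeats. -/
theorem exists_loop_of_forall_exists_edge {G : DGraph V E} {S : Set V} (hS : S.Finite)
    {v : V} (hv : v ∈ S) (hout : ∀ u ∈ S, ∃ e ∈ G.edges, s e = u ∧ r e ∈ S) :
    ∃ p u, IsLoop s r G p u ∧ ∀ e ∈ p, s e ∈ S ∧ r e ∈ S := by
  have : Nonempty E := let ⟨e, _⟩ := hout v hv; ⟨e⟩
  choose! out hout_mem hout_src hout_rng using hout
  set walk : ℕ → V := fun n => (fun u => r (out u))^[n] v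
  have hwalk_succ (n : ℕ) : walk (n + 1) = r (out (walk n)) :=
    Function.iterate_succ_apply' _ n v
  have hwalk_mem (n : ℕ) : walk n ∈ S := by
    induction n with
    | zero => exact hv
    | succ n ih => rw [hwalk_succ]; exact hout_rng _ ih
  obtain ⟨i, j, hij, hrepeat⟩ := hS.exists_lt_map_eq_of_forall_mem hwalk_mem
  set e : ℕ → E := fun k => out (walk (i + k))
  have he_src (k : ℕ) : s (e k) = walk (i + k) := hout_src _ (hwalk_mem _)
  have he_rng (k : ℕ) : r (e k) = walk (i + k + 1) := (hwalk_succ _).symm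
  obtain ⟨n, rfl⟩ : ∃ n, j = i + n + 1 := ⟨j - i - 1, by omega⟩
  refine ⟨(List.range (n + 1)).map e, walk i, ?_, ?_⟩
  · have hloop := pathFromTo_map_range (s := s) (r := r) (G := G) e
      (fun k => hout_mem _ (hwalk_mem _)) (fun k => by rw [he_rng, he_src]; rfl) n
    rwa [he_src, he_rng, ← hrepeat] at hloop
  · simp only [List.mem_map, forall_exists_index, and_imp]
    rintro _ k - rfl
    rw [he_src, he_rng]
    exact ⟨hwalk_mem _, hwalk_mem _⟩

theorem MaximalTail.of_reach_iff {G G' : DGraph V E} {γ : Set V} (h : MaximalTail s r G γ)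
    (hγ : γ ⊆ G'.verts) (hreach : ∀ v w, w ∈ γ → (Reach s r G v w ↔ Reach s r G' v w))
    (hedge : ∀ e, r e ∈ γ → (e ∈ G.edges ↔ e ∈ G'.edges)) : MaximalTail s r G' γ := by
  obtain ⟨hne, -, hcofinal, hhered, hout⟩ := h
  refine ⟨hne, hγ, fun v hv w hw => ?_, fun v w hvw hw => hhered v w ((hreach v w hw).2 hvw) hw,
    fun w hw => ?_⟩
  · obtain ⟨y, hy, hvy, hwy⟩ := hcofinal v hv w hw
    exact ⟨y, hy, (hreach v y hy).1 hvy, (hreach w y hy).1 hwy⟩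
  · obtain ⟨e, he, hse, hre⟩ := hout w hw
    exact ⟨e, (hedge e hre).1 he, hse, hre⟩

namespace OneSinkExt

variable {G Eg : DGraph V E} {v0 : V}

theorem mem_edges_of_range_mem (hext : OneSinkExt s r G Eg v0) {e : E} (he : e ∈ Eg.edges)
    (hre : r e ∈ G.verts) : e ∈ G.edges := by
  by_contra heG
  exact (hext.new_edge_range e he heG).2 hre

theorem reach_iff (hext : OneSinkExt s r G Eg v0) {v w : V} (hw : w ∈ G.verts) :
    Reach s r Eg v w ↔ Reach s r G v w :=
  ⟨fun h => h.restrict hext.wfG (fun _ => hext.mem_edges_of_range_mem) hw,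
    Reach.mono_s7 hext.sub_edges⟩

theorem maximalTail_iff (hext : OneSinkExt s r G Eg v0) {γ : Set V} (hγ : γ ⊆ G.verts) :
    MaximalTail s r Eg γ ↔ MaximalTail s r G γ := by
  have hreach (v w : V) (hw : w ∈ γ) := hext.reach_iff (v := v) (hγ hw)
  have hedge (e : E) (hre : r e ∈ γ) : e ∈ Eg.edges ↔ e ∈ G.edges :=
    ⟨fun he => hext.mem_edges_of_range_mem he (hγ hre), fun he => hext.sub_edges he⟩
  exact ⟨fun h => h.of_reach_iff hγ hreach hedge,
    fun h => h.of_reach_iff (hγ.trans hext.sub_verts) (fun v w hw => (hreach v w hw).symm)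
      (fun e hre => (hedge e hre).symm)⟩

/-- The vertices of a maximal tail outside `G` would each emit an edge to another such
vertex, producing a loop in the finite set of new vertices. -/
theorem maximalTail_subset (hext : OneSinkExt s r G Eg v0) {γ : Set V}
    (hγ : MaximalTail s r Eg γ) : γ ⊆ G.verts := by
  intro v hv
  by_contra hvG
  obtain ⟨-, hγE, -, -, hout⟩ := hγ
  have hnew : γ \ G.verts ⊆ Eg.verts \ G.verts := Set.sdiff_subset_sdiff_left hγE
  have hout_new : ∀ u ∈ γ \ G.verts, ∃ e ∈ Eg.edges, s e = u ∧ r e ∈ γ \ G.verts := by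
    rintro u ⟨hu, huG⟩
    obtain ⟨e, he, rfl, hre⟩ := hout u hu
    exact ⟨e, he, rfl, hre,
      fun hreG => huG (hext.wfG e (hext.mem_edges_of_range_mem he hreG)).1⟩
  obtain ⟨p, u, hloop, hp⟩ :=
    exists_loop_of_forall_exists_edge (hext.H_fin.subset hnew) ⟨hv, hvG⟩ hout_new
  exact hext.no_H_loops p u hloop fun e he => ⟨hnew (hp e he).1, hnew (hp e he).2⟩

end OneSinkExt

theorem maximalTails_of_extension_general
    (s r : E → V) (G Eg : DGraph V E) (v0 : V)
    (hext : OneSinkExt s r G Eg v0) :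
    (∀ γ : Set V, MaximalTail s r Eg γ → γ ⊆ G.verts) ∧
    (∀ γ : Set V, γ ⊆ G.verts →
      (MaximalTail s r Eg γ ↔ MaximalTail s r G γ)) :=
  ⟨fun _ => hext.maximalTail_subset, fun _ => hext.maximalTail_iff⟩

/-- For a 1-sink extension `(Eg, v0)` of a row-finite graph `G`,
every maximal tail of `Eg` is contained in `G^0`, and a subset `γ ⊆ G^0` is a
maximal tail in `Eg` iff it is a maximal tail in `G`. -/
theorem maximalTails_of_extension
    (s r : E → V) (G Eg : DGraph V E) (v0 : V)
    (hGrf : RowFinite s G)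
    (hext : OneSinkExt s r G Eg v0) :
    (∀ γ : Set V, MaximalTail s r Eg γ → γ ⊆ G.verts) ∧
    (∀ γ : Set V, γ ⊆ G.verts →
      (MaximalTail s r Eg γ ↔ MaximalTail s r G γ)) :=
  maximalTails_of_extension_general s r G Eg v0 hext
end

section
/- Let H and H' be complex Hilbert spaces, and let β be a map from the bounded operators on H to the bounded operators on H' which is ℂ-linear, multiplicative (β(ST) = β(S)β(T)), and star-preserving (β(S*) = β(S)*). Let e ∈ H and f ∈ H' be unit vectors such that β(e ⊗ e) = f ⊗ f, where for vectors h, k the rank-one operator h ⊗ k is defined by (h ⊗ k)(x) = ⟨k, x⟩ h. Define U : H → H' by U(h) := (β(h ⊗ e))(f). Then: (a) U is a linear isometry, i.e., ⟨U(h), U(k)⟩ = ⟨h, k⟩ for all h, k ∈ H; and (b) β(S) ∘ U = U ∘ S for every bounded operator S on H, so that U* β(S) U = S for all S. -/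
open ContinuousLinearMap InnerProductSpace

/-!
With `h ⊗ k = rankOne h k`, one has `(h ⊗ e)* (k ⊗ e) = ⟪h, k⟫ (e ⊗ e)`. Applying `β` and
using `β(e ⊗ e) = f ⊗ f` gives `⟪U h, U k⟫ = ⟪h, k⟫ ⟪f, f⟫ = ⟪h, k⟫`, while `S (h ⊗ e) = (S h) ⊗ e`
together with multiplicativity of `β` gives `β(S) U = U S`.
-/

namespace InnerProductSpace

variable {𝕜 E F : Type*} [RCLike 𝕜]
  [NormedAddCommGroup E] [InnerProductSpace 𝕜 E]
  [NormedAddCommGroup F] [InnerProductSpace 𝕜 F]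

theorem mul_rankOne (S : E →L[𝕜] E) (h e : E) : S * rankOne 𝕜 h e = rankOne 𝕜 (S h) e :=
  comp_rankOne h e S

variable [CompleteSpace E] [CompleteSpace F]

theorem star_rankOne_mul_rankOne (h k e : E) :
    star (rankOne 𝕜 h e) * rankOne 𝕜 k e = inner 𝕜 h k • rankOne 𝕜 e e := by
  rw [star_eq_adjoint, adjoint_rankOne, mul_def, rankOne_comp_rankOne]

variable (φ : (E →L[𝕜] E) →⋆ₙₐ[𝕜] (F →L[𝕜] F)) (e : E) (f : F)

noncomputable def rankOneIntertwiner : E →ₗ[𝕜] F where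
  toFun h := φ (rankOne 𝕜 h e) f
  map_add' h k := by simp only [map_add, add_apply]
  map_smul' c h := by simp only [map_smul, smul_apply, RingHom.id_apply]

theorem rankOneIntertwiner_apply (h : E) :
    rankOneIntertwiner φ e f h = φ (rankOne 𝕜 h e) f :=
  rfl

theorem inner_rankOneIntertwiner {e : E} {f : F} (hf : ‖f‖ = 1)
    (hef : φ (rankOne 𝕜 e e) = rankOne 𝕜 f f) (h k : E) :
    inner 𝕜 (rankOneIntertwiner φ e f h) (rankOneIntertwiner φ e f k) = inner 𝕜 h k := by
  calc inner 𝕜 (φ (rankOne 𝕜 h e) f) (φ (rankOne 𝕜 k e) f)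
      = inner 𝕜 f (φ (star (rankOne 𝕜 h e) * rankOne 𝕜 k e) f) := by
        rw [map_mul, map_star, star_eq_adjoint, mul_apply_eq_comp, adjoint_inner_right]
    _ = inner 𝕜 h k * inner 𝕜 f f * inner 𝕜 f f := by
        rw [star_rankOne_mul_rankOne, map_smul, hef, smul_apply, inner_smul_right,
          inner_right_rankOne_apply, mul_assoc]
    _ = inner 𝕜 h k := by simp [inner_self_eq_norm_sq_to_K, hf]

theorem map_apply_rankOneIntertwiner (S : E →L[𝕜] E) (h : E) :
    φ S (rankOneIntertwiner φ e f h) = rankOneIntertwiner φ e f (S h) := by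
  rw [rankOneIntertwiner_apply, ← mul_apply_eq_comp, ← map_mul, mul_rankOne,
    rankOneIntertwiner_apply]

end InnerProductSpace

theorem intertwiner_of_star_hom_fixing_rank_one_general
    {H H' : Type*}
    [NormedAddCommGroup H] [InnerProductSpace ℂ H] [CompleteSpace H]
    [NormedAddCommGroup H'] [InnerProductSpace ℂ H'] [CompleteSpace H']
    (β : (H →L[ℂ] H) → (H' →L[ℂ] H'))
    (hadd : ∀ S T : H →L[ℂ] H, β (S + T) = β S + β T)
    (hsmul : ∀ (c : ℂ) (S : H →L[ℂ] H), β (c • S) = c • β S)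
    (hmul : ∀ S T : H →L[ℂ] H, β (S * T) = β S * β T)
    (hstar : ∀ S : H →L[ℂ] H, β (star S) = star (β S))
    (e : H) (f : H') (hf : ‖f‖ = 1)
    (hef : β ((innerSL ℂ e).smulRight e) = (innerSL ℂ f).smulRight f)
    (U : H → H')
    (hU : ∀ h : H, U h = β ((innerSL ℂ e).smulRight h) f) :
    -- (a) U is a linear isometry
    (∀ (c : ℂ) (h k : H), U (c • h + k) = c • U h + U k) ∧
    (∀ h k : H, (inner ℂ (U h) (U k) : ℂ) = (inner ℂ h k : ℂ)) ∧
    -- (b) β(S) ∘ U = U ∘ S for every bounded operator S on H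
    (∀ (S : H →L[ℂ] H) (h : H), β S (U h) = U (S h)) := by
  let φ : (H →L[ℂ] H) →⋆ₙₐ[ℂ] (H' →L[ℂ] H') :=
    { toFun := β
      map_add' := hadd
      map_smul' := hsmul
      map_zero' := by simpa using hsmul 0 0
      map_mul' := hmul
      map_star' := hstar }
  obtain rfl : U = rankOneIntertwiner φ e f := funext hU
  refine ⟨fun c h k => by rw [map_add, map_smul], inner_rankOneIntertwiner φ hf hef,
    map_apply_rankOneIntertwiner φ e f⟩

/-- Let `β` be a ℂ-linear, multiplicative, star-preserving map
between the bounded operators on complex Hilbert spaces `H` and `H'`, and let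
`e ∈ H`, `f ∈ H'` be unit vectors with `β(e ⊗ e) = f ⊗ f`, where
`h ⊗ k : x ↦ ⟨k, x⟩ h`.  Then `U : h ↦ β(h ⊗ e) f` is a linear isometry and
`β(S) ∘ U = U ∘ S` for every bounded operator `S` on `H`. -/
theorem intertwiner_of_star_hom_fixing_rank_one
    {H H' : Type*}
    [NormedAddCommGroup H] [InnerProductSpace ℂ H] [CompleteSpace H]
    [NormedAddCommGroup H'] [InnerProductSpace ℂ H'] [CompleteSpace H']
    (β : (H →L[ℂ] H) → (H' →L[ℂ] H'))
    (hadd : ∀ S T : H →L[ℂ] H, β (S + T) = β S + β T)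
    (hsmul : ∀ (c : ℂ) (S : H →L[ℂ] H), β (c • S) = c • β S)
    (hmul : ∀ S T : H →L[ℂ] H, β (S * T) = β S * β T)
    (hstar : ∀ S : H →L[ℂ] H, β (star S) = star (β S))
    (e : H) (f : H') (he : ‖e‖ = 1) (hf : ‖f‖ = 1)
    (hef : β ((innerSL ℂ e).smulRight e) = (innerSL ℂ f).smulRight f)
    (U : H → H')
    (hU : ∀ h : H, U h = β ((innerSL ℂ e).smulRight h) f) :
    -- (a) U is a linear isometry
    (∀ (c : ℂ) (h k : H), U (c • h + k) = c • U h + U k) ∧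
    (∀ h k : H, (inner ℂ (U h) (U k) : ℂ) = (inner ℂ h k : ℂ)) ∧
    -- (b) β(S) ∘ U = U ∘ S for every bounded operator S on H
    (∀ (S : H →L[ℂ] H) (h : H), β S (U h) = U (S h)) :=
  intertwiner_of_star_hom_fixing_rank_one_general β hadd hsmul hmul hstar e f hf hef U hU
end
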